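/- arXiv:2510.20429 — 2 statements merged into one kernel-verified Lean document; each statement's English description precedes it below -/
import Mathlib

section
/- Let Δ ∈ ℝ and σ, σ_w, ν, P_c > 0, and set ρ = σ²·P_c / (σ_w²·ν²) and DG_max = Δ²/σ². If G is a real random variable with the exponential distribution of rate 1 (the law of |h|² when h ~ CN(0,1)), then E[ G·P_c·Δ² / (G·P_c·σ² + σ_w²·ν²) ] = DG_max · (1 − (1/ρ)·e^{1/ρ}·∫_{1/ρ}^∞ (e^{−t}/t) dt). (Paper's Theorem 2: the average optimal discriminant gain over Rayleigh fading equals DG_max·[1 − (1/ρ)e^{1/ρ}E₁(1/ρ)].) -/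
open MeasureTheory ProbabilityTheory Set Real
open scoped ENNReal NNReal

lemma exp_neg_one_integrableOn (a : ℝ) : IntegrableOn (fun x : ℝ => Real.exp (-x)) (Set.Ioi a) := by
  simpa using exp_neg_integrableOn_Ioi a one_pos

lemma frac_integrableOn (c : ℝ) (hc : 0 < c) :
    IntegrableOn (fun x : ℝ => Real.exp (-x) / (x + c)) (Set.Ioi 0) := by
  refine Integrable.mono ((exp_neg_one_integrableOn 0).div_const c) ?_ ?_
  · exact (Real.measurable_exp.comp measurable_neg).div
      (measurable_id.add_const c) |>.aestronglyMeasurable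
  · filter_upwards [ae_restrict_mem measurableSet_Ioi] with x hx
    have hx0 : (0:ℝ) < x := hx
    have hxc : 0 < x + c := by linarith
    rw [Real.norm_eq_abs, Real.norm_eq_abs, abs_div, abs_div, abs_of_pos (Real.exp_pos _),
      abs_of_pos hxc, abs_of_pos hc]
    exact div_le_div_of_nonneg_left (Real.exp_pos _).le hc (by linarith)

lemma shift_eq (c : ℝ) (hc : 0 < c) :
    ∫ x in Set.Ioi (0:ℝ), Real.exp (-x) / (x + c)
      = Real.exp c * ∫ t in Set.Ioi c, Real.exp (-t) / t := by
  have h1 : ∫ x in Set.Ioi (0:ℝ), Real.exp (-x) / (x + c)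
      = ∫ x in Set.Ioi (0:ℝ), Real.exp c * (Real.exp (-(x + c)) / (x + c)) := by
    refine setIntegral_congr_fun measurableSet_Ioi fun x hx => ?_
    rw [show Real.exp c * (Real.exp (-(x + c)) / (x + c))
        = Real.exp (c + -(x + c)) / (x + c) by rw [Real.exp_add]; ring]
    congr 2
    ring
  rw [h1, integral_const_mul]
  congr 1
  -- translation
  have : ∫ x in Set.Ioi (0:ℝ), Real.exp (-(x + c)) / (x + c)
      = ∫ t in Set.Ioi c, Real.exp (-t) / t := by
    have := MeasureTheory.integral_add_right_eq_self (μ := volume)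
      (Set.indicator (Set.Ioi c) (fun t : ℝ => Real.exp (-t) / t)) c
    rw [← integral_indicator measurableSet_Ioi,
      show (∫ t in Set.Ioi c, Real.exp (-t) / t)
          = ∫ x : ℝ, Set.indicator (Set.Ioi c) (fun t => Real.exp (-t) / t) x from
        (integral_indicator measurableSet_Ioi).symm, ← this]
    congr 1
    ext x
    have hm : x + c ∈ Set.Ioi c ↔ x ∈ Set.Ioi (0:ℝ) := by simp [Set.mem_Ioi]
    by_cases hx : x ∈ Set.Ioi (0:ℝ)
    · rw [Set.indicator_of_mem hx, Set.indicator_of_mem (hm.mpr hx)]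
    · rw [Set.indicator_of_notMem hx, Set.indicator_of_notMem (fun h => hx (hm.mp h))]
  exact this

lemma key_integral (c : ℝ) (hc : 0 < c) :
    ∫ x in Set.Ioi (0:ℝ), Real.exp (-x) * (x / (x + c))
      = 1 - c * Real.exp c * ∫ t in Set.Ioi c, Real.exp (-t) / t := by
  have hsplit : ∀ x ∈ Set.Ioi (0:ℝ),
      Real.exp (-x) * (x / (x + c)) = Real.exp (-x) - c * (Real.exp (-x) / (x + c)) := by
    intro x hx
    have hxc : x + c ≠ 0 := by have : (0:ℝ) < x := hx; positivity
    field_simp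
    ring
  rw [setIntegral_congr_fun measurableSet_Ioi hsplit,
    integral_sub (exp_neg_one_integrableOn 0) ((frac_integrableOn c hc).const_mul c),
    integral_exp_neg_Ioi_zero, integral_const_mul, shift_eq c hc]
  ring

/-- Paper's Theorem 2: if `G` is exponentially distributed with rate 1 (the law of `|h|²`
for `h ~ CN(0,1)`), then the average optimal discriminant gain
`E[G·P_c·Δ²/(G·P_c·σ² + σ_w²·ν²)]` equals
`DG_max·(1 − (1/ρ)·e^{1/ρ}·E₁(1/ρ))`, where `ρ = σ²·P_c/(σ_w²·ν²)` is the equivalent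
receive SNR, `DG_max = Δ²/σ²`, and `E₁(c) = ∫_c^∞ e^{−t}/t dt`. -/
theorem average_optimal_dg (Ω : Type*) [MeasureSpace Ω]
    [IsProbabilityMeasure (ℙ : Measure Ω)] (G : Ω → ℝ) (hG : Measurable G)
    (hlaw : Measure.map G ℙ = expMeasure 1)
    (Δ σ σw ν Pc ρ DGmax : ℝ) (hσ : 0 < σ) (hσw : 0 < σw) (hν : 0 < ν) (hPc : 0 < Pc)
    (hρ : ρ = σ ^ 2 * Pc / (σw ^ 2 * ν ^ 2)) (hDG : DGmax = Δ ^ 2 / σ ^ 2) :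
    ∫ ω, G ω * Pc * Δ ^ 2 / (G ω * Pc * σ ^ 2 + σw ^ 2 * ν ^ 2) ∂ℙ
      = DGmax * (1 - (1 / ρ) * Real.exp (1 / ρ)
          * ∫ t in Set.Ioi (1 / ρ), Real.exp (-t) / t) := by
  set s : ℝ := σw ^ 2 * ν ^ 2 with hs
  have hs0 : 0 < s := by positivity
  set c : ℝ := s / (Pc * σ ^ 2) with hcdef
  have hc : 0 < c := by positivity
  have hcρ : c = 1 / ρ := by
    rw [hρ, hcdef, hs]
    field_simp
  set g : ℝ → ℝ := fun x => x * Pc * Δ ^ 2 / (x * Pc * σ ^ 2 + s) with hgdef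
  have hgm : Measurable g := by
    apply Measurable.div
    · exact (measurable_id.mul_const Pc).mul_const _
    · exact ((measurable_id.mul_const Pc).mul_const _).add_const s
  -- step 1: change of variables
  have h1 : ∫ ω, G ω * Pc * Δ ^ 2 / (G ω * Pc * σ ^ 2 + s) ∂ℙ
      = ∫ x, g x ∂(expMeasure 1) := by
    rw [← hlaw, integral_map hG.aemeasurable hgm.aestronglyMeasurable]
  -- step 2: density
  have hpdf : Measurable fun x : ℝ => (gammaPDFReal 1 1 x).toNNReal :=
    (measurable_gammaPDFReal 1 1).real_toNNReal
  have h2 : ∫ x, g x ∂(expMeasure 1)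
      = ∫ x, gammaPDFReal 1 1 x * g x := by
    rw [show expMeasure 1 = volume.withDensity
        (fun x => ((gammaPDFReal 1 1 x).toNNReal : ℝ≥0∞)) from rfl,
      integral_withDensity_eq_integral_smul hpdf]
    refine integral_congr_ae (Filter.Eventually.of_forall fun x => ?_)
    simp [NNReal.smul_def, Real.coe_toNNReal',
      max_eq_left (gammaPDFReal_nonneg one_pos one_pos x)]
  -- step 3: restrict to Ioi 0
  have h3 : ∫ x, gammaPDFReal 1 1 x * g x
      = ∫ x in Set.Ioi (0:ℝ), DGmax * (Real.exp (-x) * (x / (x + c))) := by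
    rw [← integral_indicator measurableSet_Ioi]
    refine integral_congr_ae ?_
    have hae : ∀ᵐ x : ℝ ∂(volume : Measure ℝ), x ≠ 0 := by
      refine ae_iff.mpr ?_
      simp only [ne_eq, not_not, Set.setOf_eq_eq_singleton]
      exact measure_singleton 0
    filter_upwards [hae] with x hx
    rcases lt_trichotomy x 0 with h | h | h
    · rw [Set.indicator_of_notMem (by simp [Set.mem_Ioi]; linarith)]
      simp [gammaPDFReal, not_le.mpr h]
    · exact absurd h hx
    · rw [Set.indicator_of_mem (show x ∈ Set.Ioi (0:ℝ) from h)]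
      have hpdfx : gammaPDFReal 1 1 x = Real.exp (-x) := by
        simp [gammaPDFReal, h.le, Real.Gamma_one]
      rw [hpdfx, hgdef, hDG, hcdef]
      have hx1 : x * Pc * σ ^ 2 + s ≠ 0 := by positivity
      have hx2 : x + s / (Pc * σ ^ 2) ≠ 0 := by positivity
      field_simp
  rw [h1, h2, h3, integral_const_mul, ← hcρ, key_integral c hc]
end

section
/- Fix N ≥ 1, and for n = 0,…,N−1 let |h_n| > 0, σ_n > 0, ν_n > 0, Δ_n ∈ ℝ, and let σ_w, P_c, λ > 0. Define the water-filling powers p_n⋆ = (1/|h_n|²)·max(0, σ_w·|h_n|·|Δ_n|/(ν_n·√λ·σ_n²) − σ_w²/σ_n²), and suppose λ is chosen so that Σ_n ν_n²·p_n⋆ = P_c. Then for every p = (p_0,…,p_{N−1}) with p_n ≥ 0 and Σ_n ν_n²·p_n ≤ P_c, one has Σ_n |h_n|²·p_n·Δ_n²/(|h_n|²·p_n·σ_n² + σ_w²) ≤ Σ_n |h_n|²·p_n⋆·Δ_n²/(|h_n|²·p_n⋆·σ_n² + σ_w²); i.e., the water-filling solution (the paper's DG-optimal precoder |b_n^DG|²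 = p_n⋆) solves the concave sum-DG maximization problem (P2). -/
/-- Per-coordinate KKT inequality for water-filling. -/
lemma percoord (A s w L Δ2 p qs c : ℝ) (hA : 0 < A) (hs : 0 < s) (hw : 0 < w)
    (hL : 0 < L) (hΔ : 0 ≤ Δ2) (hp : 0 ≤ p) (hc0 : 0 ≤ c)
    (hc2 : L * c ^ 2 = A * Δ2 * w)
    (hqs : A * s * qs = max 0 (c - w)) :
    A * p * Δ2 / (A * p * s + w) ≤ A * qs * Δ2 / (A * qs * s + w) + L * (p - qs) := by
  have hqs0 : 0 ≤ qs := by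
    have h1 : 0 ≤ max 0 (c - w) := le_max_left _ _
    nlinarith [mul_pos hA hs]
  have hDp : 0 < A * p * s + w := by nlinarith [mul_nonneg (mul_nonneg hA.le hp) hs.le]
  rcases le_or_gt c w with hcw | hcw
  · have hm : max 0 (c - w) = 0 := max_eq_left (by linarith)
    have hq0 : qs = 0 := by
      have h2 : A * s * qs = 0 := by rw [hqs, hm]
      rcases mul_eq_zero.mp h2 with h3 | h3
      · exact absurd h3 (mul_pos hA hs).ne'
      · exact h3
    rw [hq0]
    simp only [mul_zero, zero_mul, zero_div, zero_add, sub_zero, zero_mul]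
    rw [div_le_iff₀ hDp]
    have hAd : A * Δ2 ≤ L * w := by
      nlinarith [mul_nonneg (mul_nonneg hL.le (sub_nonneg.2 hcw)) (by linarith : (0:ℝ) ≤ c + w), hw, hc2]
    nlinarith [mul_nonneg (mul_nonneg hL.le hp) (mul_nonneg (mul_nonneg hA.le hp) hs.le),
      mul_le_mul_of_nonneg_left hAd hp]
  · have hq1 : A * s * qs = c - w := by rw [hqs]; exact max_eq_right (by linarith)
    have hcpos : 0 < c := by linarith
    have hDq : A * qs * s + w = c := by nlinarith
    rw [hDq, div_add' _ _ _ hcpos.ne', div_le_div_iff₀ hDp hcpos]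
    have hid : A * s * ((A * qs * Δ2 + L * (p - qs) * c) * (A * p * s + w) - A * p * Δ2 * c)
        = L * c * (A * p * s + w - c) ^ 2 := by
      linear_combination (A * p * s + w - c) * hc2 + (A * p * s + w) * (A * Δ2 - L * c) * hq1
    nlinarith [hid, mul_pos hA hs,
      mul_nonneg (mul_nonneg hL.le hcpos.le) (sq_nonneg (A * p * s + w - c))]

/-- The DG water-filling solution
`p⋆_n = (1/|h_n|²)·max(0, σ_w·|h_n|·|Δ_n|/(ν_n·√λ·σ_n²) − σ_w²/σ_n²)`, with `λ` chosen
so that `Σ_n ν_n²·p⋆_n = P_c`, solves the concave sum-DG maximization problem (P2):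
every feasible power allocation `p` achieves a sum-DG at most that of `p⋆`. -/
theorem dg_waterfilling_optimal (N : ℕ) (hN : 1 ≤ N) (h : Fin N → ℂ)
    (σ ν : Fin N → ℝ) (Δ : Fin N → ℝ) (σw Pc lam : ℝ)
    (hh : ∀ n, 0 < ‖h n‖) (hσ : ∀ n, 0 < σ n) (hν : ∀ n, 0 < ν n)
    (hσw : 0 < σw) (hPc : 0 < Pc) (hlam : 0 < lam)
    (pstar : Fin N → ℝ)
    (hpstar : ∀ n, pstar n = (1 / ‖h n‖ ^ 2)
      * max 0 (σw * ‖h n‖ * |Δ n| / (ν n * Real.sqrt lam * (σ n) ^ 2)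
          - σw ^ 2 / (σ n) ^ 2))
    (hfull : ∑ n, (ν n) ^ 2 * pstar n = Pc) :
    ∀ p : Fin N → ℝ, (∀ n, 0 ≤ p n) → (∑ n, (ν n) ^ 2 * p n ≤ Pc) →
      ∑ n, ‖h n‖ ^ 2 * p n * (Δ n) ^ 2 / (‖h n‖ ^ 2 * p n * (σ n) ^ 2 + σw ^ 2)
        ≤ ∑ n, ‖h n‖ ^ 2 * pstar n * (Δ n) ^ 2
            / (‖h n‖ ^ 2 * pstar n * (σ n) ^ 2 + σw ^ 2) := by
  intro p hp hsum
  have hsl : Real.sqrt lam ^ 2 = lam := Real.sq_sqrt hlam.le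
  have hslpos : 0 < Real.sqrt lam := Real.sqrt_pos.2 hlam
  have key : ∀ n, ‖h n‖ ^ 2 * p n * (Δ n) ^ 2 / (‖h n‖ ^ 2 * p n * (σ n) ^ 2 + σw ^ 2)
      ≤ ‖h n‖ ^ 2 * pstar n * (Δ n) ^ 2 / (‖h n‖ ^ 2 * pstar n * (σ n) ^ 2 + σw ^ 2)
        + (lam * (ν n) ^ 2) * (p n - pstar n) := by
    intro n
    have hA : (0:ℝ) < ‖h n‖ ^ 2 := pow_pos (hh n) 2
    have hs2 : (0:ℝ) < (σ n) ^ 2 := pow_pos (hσ n) 2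
    set c : ℝ := σw * ‖h n‖ * |Δ n| / (ν n * Real.sqrt lam) with hc_def
    have hc0 : 0 ≤ c := div_nonneg
      (mul_nonneg (mul_nonneg hσw.le (norm_nonneg _)) (abs_nonneg _))
      (mul_pos (hν n) hslpos).le
    have hc2 : (lam * (ν n) ^ 2) * c ^ 2 = ‖h n‖ ^ 2 * (Δ n) ^ 2 * σw ^ 2 := by
      rw [hc_def, div_pow, ← mul_div_assoc,
        div_eq_iff (pow_ne_zero 2 (mul_pos (hν n) hslpos).ne')]
      have habs : |Δ n| ^ 2 = (Δ n) ^ 2 := sq_abs (Δ n)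
      linear_combination (lam * (ν n) ^ 2 * σw ^ 2 * ‖h n‖ ^ 2) * habs
        - (‖h n‖ ^ 2 * (Δ n) ^ 2 * σw ^ 2 * (ν n) ^ 2) * hsl
    have harg : σw * ‖h n‖ * |Δ n| / (ν n * Real.sqrt lam * (σ n) ^ 2) - σw ^ 2 / (σ n) ^ 2
        = (c - σw ^ 2) / (σ n) ^ 2 := by
      rw [hc_def]
      field_simp
    have hqs : ‖h n‖ ^ 2 * (σ n) ^ 2 * pstar n = max 0 (c - σw ^ 2) := by
      rw [hpstar n, harg]
      have hmax : max 0 ((c - σw ^ 2) / (σ n) ^ 2) = max 0 (c - σw ^ 2) / (σ n) ^ 2 := by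
        rw [← max_div_div_right hs2.le, zero_div]
      rw [hmax]
      field_simp
      exact mul_div_cancel_left₀ _ (mul_pos (hh n) (hσ n)).ne'
    exact percoord (‖h n‖ ^ 2) ((σ n) ^ 2) (σw ^ 2) (lam * (ν n) ^ 2) ((Δ n) ^ 2)
      (p n) (pstar n) c hA hs2 (pow_pos hσw 2) (mul_pos hlam (pow_pos (hν n) 2))
      (sq_nonneg _) (hp n) hc0 hc2 hqs
  calc ∑ n, ‖h n‖ ^ 2 * p n * (Δ n) ^ 2 / (‖h n‖ ^ 2 * p n * (σ n) ^ 2 + σw ^ 2)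
      ≤ ∑ n, (‖h n‖ ^ 2 * pstar n * (Δ n) ^ 2 / (‖h n‖ ^ 2 * pstar n * (σ n) ^ 2 + σw ^ 2)
          + (lam * (ν n) ^ 2) * (p n - pstar n)) :=
        Finset.sum_le_sum fun n _ => key n
    _ = (∑ n, ‖h n‖ ^ 2 * pstar n * (Δ n) ^ 2 / (‖h n‖ ^ 2 * pstar n * (σ n) ^ 2 + σw ^ 2))
          + lam * ((∑ n, (ν n) ^ 2 * p n) - ∑ n, (ν n) ^ 2 * pstar n) := by
        rw [Finset.sum_add_distrib, ← Finset.sum_sub_distrib, Finset.mul_sum]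
        congr 1
        apply Finset.sum_congr rfl
        intro n _
        ring
    _ ≤ ∑ n, ‖h n‖ ^ 2 * pstar n * (Δ n) ^ 2 / (‖h n‖ ^ 2 * pstar n * (σ n) ^ 2 + σw ^ 2) := by
        have : (∑ n, (ν n) ^ 2 * p n) - ∑ n, (ν n) ^ 2 * pstar n ≤ 0 := by
          rw [hfull]; linarith
        nlinarith [mul_nonpos_of_nonneg_of_nonpos hlam.le this]
end
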